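/- Let μ be a Borel probability measure on 𝒴̃ and define φ : 𝒵 → ℝ by φ(Z) := μ(Q̃_Z). Then: (i) φ(constant D) = 1; (ii) φ is positive definite with respect to ∨, i.e. for every n, all Z₁, …, Zₙ ∈ 𝒵 and all c₁, …, cₙ ∈ ℝ, Σ_{i,j=1}^{n} c_i c_j φ(Z_i ∨ Z_j) ≥ 0; (iii) φ is continuous from below, i.e. for every Z ∈ 𝒵, φ(Z_{-ε}) → φ(Z) as ε ↓ 0. -/

import Mathlib

open Set NNReal ENNReal

/-- A "partial order" on `M`: a reflexive and transitive (not necessarily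
antisymmetric) relation, identified with a subset of `M × M`. -/
def IsPO {M : Type*} (V : Set (M × M)) : Prop :=
  (∀ j : M, (j, j) ∈ V) ∧ ∀ j k l : M, (j, k) ∈ V → (k, l) ∈ V → (j, l) ∈ V

/-- The diagonal relation `D`. -/
def diagRel (M : Type*) : Set (M × M) := {p : M × M | p.1 = p.2}

/-- The smallest partial order containing `S` (reflexive-transitive closure). -/
def poGen {M : Type*} (S : Set (M × M)) : Set (M × M) :=
  ⋂₀ {V : Set (M × M) | IsPO V ∧ S ⊆ V}

/-- The join of two partial orders: the smallest partial order containing their union. -/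
def poJoin {M : Type*} (V W : Set (M × M)) : Set (M × M) := poGen (V ∪ W)

/-- Membership in `𝒴`: maps `Y : [0,∞) → {partial orders on M}` with `Y 0 = D`,
increasing, and left-continuous. -/
def MemY {M : Type*} (Y : ℝ≥0 → Set (M × M)) : Prop :=
  (∀ t : ℝ≥0, IsPO (Y t)) ∧ Y 0 = diagRel M ∧
    (∀ s t : ℝ≥0, s ≤ t → Y s ⊆ Y t) ∧
    ∀ t : ℝ≥0, 0 < t → Y t = ⋃ s ∈ Set.Iio t, Y s

/-- The pointwise join on `𝒴`. -/
def joinY {M : Type*} (Y Z : ℝ≥0 → Set (M × M)) : ℝ≥0 → Set (M × M) :=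
  fun t => poJoin (Y t) (Z t)

/-- The support of a partial order `V`. -/
def suppV {M : Type*} (V : Set (M × M)) : Set M :=
  {j : M | ∃ k : M, k ≠ j ∧ ((j, k) ∈ V ∨ (k, j) ∈ V)}

/-- The support of an order process `Y ∈ 𝒴`. -/
def suppY {M : Type*} (Y : ℝ≥0 → Set (M × M)) : Set M := ⋃ t : ℝ≥0, suppV (Y t)

/-- Membership in `𝒵`: elements of `𝒴` with finite support. -/
def MemZ {M : Type*} (Y : ℝ≥0 → Set (M × M)) : Prop := MemY Y ∧ (suppY Y).Finite

/-- The delayed process `Z₋ε` (`ℝ≥0` has truncated subtraction, so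
`Z₋ε t = Z (t - ε)` equals `Z 0 = D` for `t ≤ ε`). -/
def shiftY {M : Type*} (Z : ℝ≥0 → Set (M × M)) (ε : ℝ≥0) : ℝ≥0 → Set (M × M) :=
  fun t => Z (t - ε)

/-- The switching-time function `f_Y` with values in `[0,∞]` (`inf ∅ = ∞`). -/
noncomputable def fY {M : Type*} (Y : ℝ≥0 → Set (M × M)) (p : M × M) : ℝ≥0∞ :=
  ⨅ (s : ℝ≥0) (_ : p ∈ Y s), (s : ℝ≥0∞)

/-- The off-diagonal pairs `(M × M) ∖ D`. -/
abbrev OffDiag (M : Type*) : Type _ := {p : M × M // p.1 ≠ p.2}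

/-- The set `𝒴̃` of ultrametric-type functions on off-diagonal pairs. -/
def tildeY (M : Type*) : Set (OffDiag M → ℝ≥0∞) :=
  {f | ∀ (j k l : M) (hjk : j ≠ k) (hkl : k ≠ l) (hjl : j ≠ l),
    f ⟨(j, l), hjl⟩ ≤ max (f ⟨(j, k), hjk⟩) (f ⟨(k, l), hkl⟩)}

/-- The switching-time function restricted to off-diagonal pairs. -/
noncomputable def fYo {M : Type*} (Y : ℝ≥0 → Set (M × M)) : OffDiag M → ℝ≥0∞ :=
  fun p => fY Y p.1

/-- `Q̃_Z`, as a subset of `𝒴̃`. -/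
def Qtilde {M : Type*} (Z : ℝ≥0 → Set (M × M)) : Set (tildeY M) :=
  {f : tildeY M | ∀ p : OffDiag M, f.1 p ≤ fYo Z p}

/-- Positive definiteness with respect to `∨` of a function on `𝒵`. -/
def PosDefZ {M : Type*} (φ : (ℝ≥0 → Set (M × M)) → ℝ) : Prop :=
  ∀ (n : ℕ) (Z : Fin n → ℝ≥0 → Set (M × M)), (∀ i, MemZ (Z i)) →
    ∀ c : Fin n → ℝ, 0 ≤ ∑ i, ∑ j, c i * c j * φ (joinY (Z i) (Z j))

/-- Continuity from below of a function on `𝒵`: `φ(Z₋ε) → φ(Z)` as `ε ↓ 0`. -/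
def ContFromBelow {M : Type*} (φ : (ℝ≥0 → Set (M × M)) → ℝ) : Prop :=
  ∀ Z : ℝ≥0 → Set (M × M), MemZ Z →
    Filter.Tendsto (fun ε : ℝ≥0 => φ (shiftY Z ε)) (nhdsWithin 0 (Set.Ioi 0)) (nhds (φ Z))

/-!
For `f ∈ 𝒴̃` the sublevel relations `{f ≤ t}` are partial orders (the ultrametric inequality is
transitivity), so `f ≤ f_Y` and `f ≤ f_Z` force `f ≤ f_{Y ∨ Z}`: `Q̃_{Y ∨ Z} = Q̃_Y ∩ Q̃_Z`.
Positive definiteness is then `∫ (∑ cᵢ 1_{Q̃_{Zᵢ}})² dμ ≥ 0`, and continuity from below is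
continuity of `μ` along the family `Q̃_{Z₋ε}`, which decreases to `Q̃_Z` as `ε ↓ 0` because
`f_Z ≤ f_{Z₋ε} ≤ f_Z + ε`.
-/

open MeasureTheory Filter Topology

section Measure

variable {α ι : Type*} [MeasurableSpace α] [Fintype ι]

theorem sum_mul_measureReal_inter_eq_integral_sq (μ : Measure α) [IsFiniteMeasure μ]
    {Q : ι → Set α} (hQ : ∀ i, MeasurableSet (Q i)) (c : ι → ℝ) :
    ∑ i, ∑ j, c i * c j * μ.real (Q i ∩ Q j) =
      ∫ x, (∑ i, c i * (Q i).indicator 1 x) ^ 2 ∂μ := by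
  have hint : ∀ i j, Integrable (fun x => c i * c j * (Q i ∩ Q j).indicator (1 : α → ℝ) x) μ :=
    fun i j => ((integrable_const 1).indicator ((hQ i).inter (hQ j))).const_mul _
  simp_rw [sq, Finset.sum_mul_sum, mul_mul_mul_comm, ← Pi.mul_apply _ _ (_ : α),
    ← Set.inter_indicator_one]
  rw [integral_finsetSum _ fun i _ => integrable_finsetSum _ fun j _ => hint i j]
  refine Finset.sum_congr rfl fun i _ => ?_
  rw [integral_finsetSum _ fun j _ => hint i j]
  refine Finset.sum_congr rfl fun j _ => ?_
  rw [integral_const_mul, integral_indicator_one ((hQ i).inter (hQ j))]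

theorem sum_mul_measureReal_inter_nonneg (μ : Measure α) [IsFiniteMeasure μ]
    {Q : ι → Set α} (hQ : ∀ i, MeasurableSet (Q i)) (c : ι → ℝ) :
    0 ≤ ∑ i, ∑ j, c i * c j * μ.real (Q i ∩ Q j) := by
  rw [sum_mul_measureReal_inter_eq_integral_sq μ hQ c]
  exact integral_nonneg fun x => sq_nonneg _

end Measure

section OrderProcess

variable {M : Type*}

theorem poGen_subset {S V : Set (M × M)} (hV : IsPO V) (hSV : S ⊆ V) : poGen S ⊆ V :=
  sInter_subset_of_mem ⟨hV, hSV⟩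

theorem subset_poGen (S : Set (M × M)) : S ⊆ poGen S := fun _ hp _ hV => hV.2 hp

theorem fY_le {Y : ℝ≥0 → Set (M × M)} {p : M × M} {t : ℝ≥0} (h : p ∈ Y t) : fY Y p ≤ t :=
  iInf₂_le t h

theorem fY_le_fY_of_subset {Y Y' : ℝ≥0 → Set (M × M)} (h : ∀ t, Y t ⊆ Y' t) (p : M × M) :
    fY Y' p ≤ fY Y p :=
  le_iInf₂ fun t ht => fY_le (h t ht)

def levelRel (f : OffDiag M → ℝ≥0∞) (t : ℝ≥0) : Set (M × M) :=
  {p | ∀ h : p.1 ≠ p.2, f ⟨p, h⟩ ≤ t}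

theorem isPO_levelRel {f : OffDiag M → ℝ≥0∞} (hf : f ∈ tildeY M) (t : ℝ≥0) :
    IsPO (levelRel f t) := by
  refine ⟨fun j h => absurd rfl h, fun j k l hjk hkl hjl => ?_⟩
  by_cases hj : j = k
  · subst hj; exact hkl hjl
  by_cases hl : k = l
  · subst hl; exact hjk hjl
  exact (hf j k l hj hl hjl).trans (max_le (hjk hj) (hkl hl))

theorem subset_levelRel_of_mem_Qtilde {Y : ℝ≥0 → Set (M × M)} {f : tildeY M}
    (hf : f ∈ Qtilde Y) (t : ℝ≥0) : Y t ⊆ levelRel f.1 t :=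
  fun p hp h => (hf ⟨p, h⟩).trans (fY_le hp)

theorem Qtilde_joinY (Y Z : ℝ≥0 → Set (M × M)) :
    Qtilde (joinY Y Z) = Qtilde Y ∩ Qtilde Z := by
  ext f
  refine ⟨fun h => ⟨fun p => (h p).trans ?_, fun p => (h p).trans ?_⟩, fun ⟨hY, hZ⟩ p => ?_⟩
  · exact fY_le_fY_of_subset (fun _ => (subset_union_left).trans (subset_poGen _)) p.1
  · exact fY_le_fY_of_subset (fun _ => (subset_union_right).trans (subset_poGen _)) p.1
  · refine le_iInf₂ fun t ht => ?_
    have hjoin : joinY Y Z t ⊆ levelRel f.1 t := poGen_subset (isPO_levelRel f.2 t)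
      (union_subset (subset_levelRel_of_mem_Qtilde hY t) (subset_levelRel_of_mem_Qtilde hZ t))
    exact hjoin ht p.2

theorem measurableSet_Qtilde [Countable M] (Z : ℝ≥0 → Set (M × M)) :
    MeasurableSet (Qtilde Z) := by
  have h : Qtilde Z = ⋂ p : OffDiag M, (fun f : tildeY M => f.1 p) ⁻¹' Iic (fYo Z p) := by
    ext f; simp [Qtilde]
  rw [h]
  exact MeasurableSet.iInter fun p =>
    ((measurable_pi_apply p).comp measurable_subtype_coe) measurableSet_Iic

theorem Qtilde_diagRel : Qtilde (fun _ : ℝ≥0 => diagRel M) = univ := by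
  refine eq_univ_of_forall fun f p => ?_
  have : fYo (fun _ : ℝ≥0 => diagRel M) p = ∞ := by simp [fYo, fY, diagRel, p.2]
  simp [this]

theorem fY_shiftY_le (Z : ℝ≥0 → Set (M × M)) (ε : ℝ≥0) (p : M × M) :
    fY (shiftY Z ε) p ≤ fY Z p + ε := by
  simp only [fY, ENNReal.iInf_add]
  refine le_iInf₂ fun s hs => ?_
  have hmem : p ∈ shiftY Z ε (s + ε) := by rwa [shiftY, add_tsub_cancel_right]
  exact (fY_le hmem).trans_eq (by push_cast; rfl)

theorem shiftY_subset_shiftY {Z : ℝ≥0 → Set (M × M)} (hZ : Monotone Z) {ε ε' : ℝ≥0}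
    (h : ε ≤ ε') (t : ℝ≥0) : shiftY Z ε' t ⊆ shiftY Z ε t :=
  hZ (tsub_le_tsub_left h t)

theorem Qtilde_shiftY_mono {Z : ℝ≥0 → Set (M × M)} (hZ : Monotone Z) :
    Monotone fun ε => Qtilde (shiftY Z ε) :=
  fun _ _ h _ hf p => (hf p).trans (fY_le_fY_of_subset (shiftY_subset_shiftY hZ h) p.1)

theorem biInter_Qtilde_shiftY {Z : ℝ≥0 → Set (M × M)} (hZ : Monotone Z) :
    ⋂ ε > 0, Qtilde (shiftY Z ε) = Qtilde Z := by
  refine subset_antisymm (fun f hf p => ?_) (subset_iInter₂ fun ε _ => ?_)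
  · refine ENNReal.le_of_forall_pos_le_add fun ε hε _ => ?_
    exact ((mem_iInter₂.mp hf ε hε) p).trans (fY_shiftY_le Z ε p.1)
  · exact fun f hf p => (hf p).trans (fY_le_fY_of_subset (fun _ => hZ tsub_le_self) p.1)

theorem tendsto_measure_Qtilde_shiftY [Countable M] (μ : Measure (tildeY M)) [IsFiniteMeasure μ]
    {Z : ℝ≥0 → Set (M × M)} (hZ : Monotone Z) :
    Tendsto (fun ε => μ (Qtilde (shiftY Z ε))) (𝓝[>] 0) (𝓝 (μ (Qtilde Z))) := by
  rw [← biInter_Qtilde_shiftY hZ]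
  exact tendsto_measure_biInter_gt (fun ε _ => (measurableSet_Qtilde _).nullMeasurableSet)
    (fun _ _ _ h => Qtilde_shiftY_mono hZ h) ⟨1, one_pos, measure_ne_top μ _⟩

end OrderProcess

theorem phi_of_measure_general {M : Type*} [Countable M]
    (μ : MeasureTheory.Measure (tildeY M)) [MeasureTheory.IsProbabilityMeasure μ] :
    (μ (Qtilde (fun _ : ℝ≥0 => diagRel M))).toReal = 1 ∧
      PosDefZ (fun Z : ℝ≥0 → Set (M × M) => (μ (Qtilde Z)).toReal) ∧
      ContFromBelow (fun Z : ℝ≥0 → Set (M × M) => (μ (Qtilde Z)).toReal) := by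
  refine ⟨?_, fun n Z _ c => ?_, fun Z hZ => ?_⟩
  · rw [Qtilde_diagRel, measure_univ, ENNReal.toReal_one]
  · simpa only [Qtilde_joinY, ← measureReal_def] using
      sum_mul_measureReal_inter_nonneg μ (fun i => measurableSet_Qtilde (Z i)) c
  · exact (ENNReal.tendsto_toReal (measure_ne_top μ _)).comp
      (tendsto_measure_Qtilde_shiftY μ hZ.1.2.2.1)

/-- For a Borel probability measure `μ` on `𝒴̃`, the function
`φ(Z) := μ(Q̃_Z)` is normalised, positive definite with respect to `∨`,
and continuous from below. -/
theorem phi_of_measure {M : Type*} [Countable M] [Infinite M]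
    (μ : MeasureTheory.Measure (tildeY M)) [MeasureTheory.IsProbabilityMeasure μ] :
    (μ (Qtilde (fun _ : ℝ≥0 => diagRel M))).toReal = 1 ∧
      PosDefZ (fun Z : ℝ≥0 → Set (M × M) => (μ (Qtilde Z)).toReal) ∧
      ContFromBelow (fun Z : ℝ≥0 → Set (M × M) => (μ (Qtilde Z)).toReal) :=
  phi_of_measure_general μ
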